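/- Let f be smooth, symmetric and concave on the positive orthant Γₙ with fᵢ > 0, σ ∈ (sup_{∂Γₙ} f, sup_{Γₙ} f), and let x₀ be the closest point of the level set ∂Γ^σ = f⁻¹(σ) to the origin. Then for every ε > 0 there exists R > 0 such that for every λ ∈ ∂Γ^σ with λ₁ = max_i λᵢ > R, one has f₁(λ) < ε · Σᵢ fᵢ(λ). -/

import Mathlib

open Finset

-- gradient inequality for concave functions on open convex sets
lemma concave_grad_ineq {E : Type*} [NormedAddCommGroup E] [NormedSpace ℝ E]
    {f : E → ℝ} {s : Set E} (hs : IsOpen s) (hconc : ConcaveOn ℝ s f)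
    {x y : E} (hx : x ∈ s) (hy : y ∈ s) (hdiff : DifferentiableAt ℝ f x)
    (hfy : f x ≤ f y) : 0 ≤ fderiv ℝ f x (y - x) := by
  set g : ℝ → E := fun t => x + t • (y - x) with hg
  have hgd : HasDerivAt g (y - x) 0 := by
    have := ((hasDerivAt_id (0:ℝ)).smul_const (y - x)).const_add x
    rw [one_smul] at this
    exact this
  have h0 : g 0 = x := by simp [hg]
  have hfd : HasFDerivAt f (fderiv ℝ f x) (g 0) := h0 ▸ hdiff.hasFDerivAt
  have hcomp : HasDerivAt (f ∘ g) (fderiv ℝ f x (y - x)) 0 :=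
    hfd.comp_hasDerivAt 0 hgd
  have htend := hasDerivAt_iff_tendsto_slope.1 hcomp
  have htend' : Filter.Tendsto (slope (f ∘ g) 0) (nhdsWithin 0 (Set.Ioi 0))
      (nhds (fderiv ℝ f x (y - x))) :=
    htend.mono_left (nhdsWithin_mono 0 (fun t ht => ne_of_gt ht))
  refine ge_of_tendsto htend' ?_
  filter_upwards [Ioo_mem_nhdsGT_of_mem (by simp : (0:ℝ) ∈ Set.Ico 0 1)] with t ht
  have hgt : g t = t • y + (1 - t) • x := by simp only [hg]; module
  have hmem : g t ∈ s :=
    hgt ▸ hconc.1 hy hx ht.1.le (by linarith [ht.2]) (show t + (1-t) = 1 by ring)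
  have key := hconc.2 hy hx ht.1.le (by linarith [ht.2] : (0:ℝ) ≤ 1 - t)
    (show t + (1-t) = 1 by ring)
  rw [← hgt, smul_eq_mul, smul_eq_mul] at key
  have hge : f x ≤ f (g t) := by nlinarith [ht.1]
  have hslope : slope (f ∘ g) 0 t = (f (g t) - f x) / t := by
    simp [slope, h0, Function.comp, div_eq_inv_mul]
  rw [hslope]
  exact div_nonneg (by linarith) ht.1.le

theorem largest_deriv_small_for_large_eigenvalue
    (n : ℕ) (f : (Fin n → ℝ) → ℝ) (σ : ℝ)
    (Γn : Set (Fin n → ℝ)) (hΓn : Γn = {x : Fin n → ℝ | ∀ i, 0 < x i})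
    (hsmooth : ContDiffOn ℝ (⊤ : ℕ∞) f Γn)
    (hsym : ∀ (π : Equiv.Perm (Fin n)), ∀ x ∈ Γn, f (fun i => x (π i)) = f x)
    (hconc : ConcaveOn ℝ Γn f)
    (D : (Fin n → ℝ) → Fin n → ℝ)
    (hDdef : ∀ x ∈ Γn, ∀ i, D x i = fderiv ℝ f x (Pi.single i 1))
    (hDpos : ∀ x ∈ Γn, ∀ i, 0 < D x i)
    (x₀ : Fin n → ℝ) (hx₀Γ : x₀ ∈ Γn) (hx₀ : f x₀ = σ)
    (hclosest : ∀ y ∈ Γn, f y = σ →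
      Real.sqrt (∑ i, x₀ i ^ 2) ≤ Real.sqrt (∑ i, y i ^ 2)) :
    ∀ ε : ℝ, 0 < ε → ∃ R : ℝ, 0 < R ∧
      ∀ lam ∈ Γn, f lam = σ →
        ∀ i : Fin n, (∀ j, lam j ≤ lam i) → R < lam i →
          D lam i < ε * ∑ j, D lam j := by
  intro ε hε
  have hopen : IsOpen Γn := by
    rw [hΓn, Set.setOf_forall]
    exact isOpen_iInter_of_finite fun i =>
      isOpen_lt continuous_const (continuous_apply i)
  set M := ∑ j, x₀ j with hM
  have hx₀pos : ∀ j, 0 < x₀ j := by rw [hΓn] at hx₀Γ; exact hx₀Γ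
  have hM0 : 0 ≤ M := Finset.sum_nonneg fun j _ => (hx₀pos j).le
  refine ⟨M / ε + 1, by positivity, ?_⟩
  intro lam hlam hflam i himax hiR
  have hlampos : ∀ j, 0 < lam j := by rw [hΓn] at hlam; exact hlam
  have hdiff : DifferentiableAt ℝ f lam :=
    (hsmooth.contDiffAt (hopen.mem_nhds hlam)).differentiableAt (by simp)
  have hgrad : 0 ≤ fderiv ℝ f lam (x₀ - lam) :=
    concave_grad_ineq hopen hconc hlam hx₀Γ hdiff (by rw [hflam, hx₀])
  have hexp : ∀ v : Fin n → ℝ, fderiv ℝ f lam v = ∑ j, v j * D lam j := by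
    intro v
    have hv : v = ∑ j, v j • (Pi.single j 1 : Fin n → ℝ) := by
      funext k
      simp [Pi.single_apply, Finset.sum_apply, mul_ite]
    conv_lhs => rw [hv]
    rw [map_sum]
    refine Finset.sum_congr rfl fun j _ => ?_
    rw [map_smul, hDdef lam hlam j, smul_eq_mul]
  have h1 : ∑ j, lam j * D lam j ≤ ∑ j, x₀ j * D lam j := by
    have h := hgrad
    rw [hexp] at h
    have : ∑ j, (x₀ - lam) j * D lam j
        = ∑ j, x₀ j * D lam j - ∑ j, lam j * D lam j := by
      rw [← Finset.sum_sub_distrib]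
      exact Finset.sum_congr rfl fun j _ => by simp [sub_mul]
    linarith [this ▸ h]
  have hDposl : ∀ j : Fin n, 0 < D lam j := hDpos lam hlam
  have h2 : lam i * D lam i ≤ ∑ j, lam j * D lam j :=
    Finset.single_le_sum (f := fun j => lam j * D lam j)
      (fun j _ => (mul_pos (hlampos j) (hDposl j)).le) (Finset.mem_univ i)
  set S := ∑ j, D lam j with hS
  have hSpos : 0 < S := by
    have := Finset.single_le_sum (f := fun j => D lam j)
      (fun j _ => (hDposl j).le) (Finset.mem_univ i)
    linarith [hDposl i]
  have h3 : ∑ j, x₀ j * D lam j ≤ M * S := by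
    rw [hM, Finset.sum_mul]
    refine Finset.sum_le_sum fun j _ => ?_
    have hj : D lam j ≤ S := Finset.single_le_sum (f := fun k => D lam k)
      (fun k _ => (hDposl k).le) (Finset.mem_univ j)
    exact mul_le_mul_of_nonneg_left hj (hx₀pos j).le
  have hlami : 0 < lam i := hlampos i
  have hMlt : M < ε * lam i := by
    have : M / ε + 1 < lam i := hiR
    have h4 : M / ε < lam i := by linarith
    calc M = ε * (M / ε) := by field_simp
    _ < ε * lam i := by exact mul_lt_mul_of_pos_left h4 hε
  have hfin : lam i * D lam i < lam i * (ε * S) := by nlinarith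
  exact lt_of_mul_lt_mul_left hfin hlami.le
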